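/- Fix r ≥ 3 and integers n_1, …, n_{r−1} with n_j ≥ 2 for all j, and let n = Π_{j=1}^{r−1} n_j and ñ = n − 1 − Σ_{j=1}^{r−1}(n_j − 1). Index coordinates by tuples x = (x_1, …, x_{r−1}) ∈ Π_j {1, …, n_j}, and for v ∈ ℝ^r define the n×n symmetric matrix Σ(v) by Σ(v)_{x,y} = Σ_{j=1}^{r−1} v_j·1{x_j = y_j} + v_r·1{x = y}. Let ψ ∈ ℝ^r satisfy ψ_j ≥ 0 for j < r and ψ_r > 0 (so Σ(ψ) is positive definite), set A(v,ψ) = Σ(ψ)^{-1/2}Σ(v)Σ(ψ)^{-1/2}, and for v with ‖A(v,ψ)‖_F ≠ 0 set a(v,ψ) = ‖A(v,ψ)‖/‖A(v,ψ)‖_F. Then for every such v ≠ 0, a(v,ψ)² ≤ Σ_{j=1}^{r−1} 1/(n_j − 1) + (r−2)²/ñ ≤ (r−1)/(n_min − 1) + (r−2)²/ñ, where n_min = min_j n_j. -/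

import Mathlib

open Matrix

open Classical in
/-- The positive semidefinite square root of a matrix (junk value `0` off the
positive semidefinite matrices). -/
noncomputable def msqrt {ι : Type*} [Fintype ι] [DecidableEq ι] (M : Matrix ι ι ℝ) :
    Matrix ι ι ℝ :=
  if h : M.PosSemidef then
    (h.1.eigenvectorUnitary : Matrix ι ι ℝ) * diagonal (fun i => Real.sqrt (h.1.eigenvalues i)) *
      (star h.1.eigenvectorUnitary : Matrix ι ι ℝ)
  else 0

/-- The spectral norm of a real square matrix. -/
noncomputable def specNorm {ι : Type*} [Fintype ι] [DecidableEq ι]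
    (M : Matrix ι ι ℝ) : ℝ :=
  ‖Matrix.toEuclideanCLM (𝕜 := ℝ) M‖

/-- The Frobenius norm of a real matrix. -/
noncomputable def frobNorm {ι : Type*} [Fintype ι] (M : Matrix ι ι ℝ) : ℝ :=
  Real.sqrt (∑ i, ∑ j, (M i j) ^ 2)

/-- The covariance matrix of the crossed random effects model, with rows and columns
indexed by tuples `x ∈ Π_j {1,…,n_j}`:
`Σ(v)_{x,y} = ∑_{j<r} v_j 1{x_j = y_j} + v_r 1{x = y}`. -/
noncomputable def SigmaCross {rm1 : ℕ} (nn : Fin rm1 → ℕ) (v : Fin (rm1 + 1) → ℝ) :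
    Matrix (∀ j, Fin (nn j)) (∀ j, Fin (nn j)) ℝ :=
  Matrix.of fun x y =>
    (∑ j, if x j = y j then v j.castSucc else 0) + (if x = y then v (Fin.last rm1) else 0)

/-!
For `S ⊆ {1, …, r-1}` let `Q_S = ⊗_j (j ∈ S ? I - P_j : P_j)`. These are orthogonal projections
resolving the identity, `Q_S` has rank `d_S = ∏_{j ∈ S} (n_j - 1)`, and
`Σ(v) = ∑_S λ_S(v) Q_S` with `λ_S(v) = v_r` as soon as `|S| ≥ 2`. Hence
`A(v,ψ) = ∑_S c_S Q_S` with `c_S = λ_S(v) / λ_S(ψ)`, so that `‖A‖ ≤ max_S |c_S|` and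
`‖A‖_F² = c_∅² + ∑_j c_{j}² (n_j - 1) + b² ñ` with `b = v_r / ψ_r`. Each of `c_{j}²` and `b²` is
controlled by one term of this sum, and `c_∅` by Cauchy–Schwarz once one writes
`λ_∅(v) = ∑_j λ_{j}(v) - (r - 2) v_r` and uses `λ_∅(ψ) ≥ λ_{j}(ψ), ψ_r`.
-/

open Finset

open scoped MatrixOrder in
lemma msqrt_eq_of_mul_self {n : Type*} [Fintype n] [DecidableEq n] {M B : Matrix n n ℝ}
    (hB : B.PosSemidef) (hBB : B * B = M) : msqrt M = B := by
  have hM : M.PosSemidef := hBB ▸ sq B ▸ hB.pow 2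
  have hcfc : (hM.1.eigenvectorUnitary : Matrix n n ℝ) *
      Matrix.diagonal (fun i => √(hM.1.eigenvalues i)) *
      (star hM.1.eigenvectorUnitary : Matrix n n ℝ) = CFC.sqrt M := by
    rw [CFC.sqrt_eq_cfc, cfc_nnreal_eq_real _ M, hM.1.cfc_eq, Matrix.IsHermitian.cfc,
      Unitary.conjStarAlgAut_apply]
    congr 2
    funext i
    congr 2
    funext k
    simp [max_eq_left (hM.eigenvalues_nonneg k)]
  rw [msqrt, dif_pos hM, hcfc, CFC.sqrt_eq_iff _ _ hM.nonneg hB.nonneg, hBB]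

lemma specNorm_le_of_forall_dotProduct_le {n : Type*} [Fintype n] [DecidableEq n]
    {A : Matrix n n ℝ} {m : ℝ} (hm : 0 ≤ m)
    (h : ∀ u, (A *ᵥ u) ⬝ᵥ (A *ᵥ u) ≤ m ^ 2 * (u ⬝ᵥ u)) : specNorm A ≤ m := by
  refine ContinuousLinearMap.opNorm_le_bound _ hm fun x => ?_
  have hsq (y : EuclideanSpace ℝ n) : ‖y‖ ^ 2 = y.ofLp ⬝ᵥ y.ofLp := by
    rw [EuclideanSpace.real_norm_sq_eq]; simp [dotProduct, sq]
  rw [← pow_le_pow_iff_left₀ (norm_nonneg _) (by positivity) two_ne_zero, mul_pow, hsq, hsq,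
    Matrix.ofLp_toEuclideanCLM]
  exact h _

/-- Cauchy–Schwarz over `Option K`, the extra index carrying `p |b|`. -/
lemma sq_le_sum_inv_add_mul_sum {K : Type*} [Fintype K] {a c : K → ℝ} {c₀ b p t : ℝ}
    (ha : ∀ k, 0 < a k) (ht : 0 < t) (h : |c₀| ≤ ∑ k, |c k| + p * |b|) :
    c₀ ^ 2 ≤ (∑ k, (a k)⁻¹ + p ^ 2 / t) * (∑ k, c k ^ 2 * a k + b ^ 2 * t) := by
  have hcs := sum_sq_le_sum_mul_sum_of_sq_le_mul univ
    (r := fun o : Option K => o.elim (p * |b|) fun k => |c k|)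
    (f := fun o => o.elim (p ^ 2 / t) fun k => (a k)⁻¹)
    (g := fun o => o.elim (b ^ 2 * t) fun k => c k ^ 2 * a k)
    (fun o _ => by cases o; exacts [div_nonneg (sq_nonneg p) ht.le, (inv_pos.2 (ha _)).le])
    (fun o _ => by
      cases o; exacts [mul_nonneg (sq_nonneg b) ht.le, mul_nonneg (sq_nonneg _) (ha _).le])
    (fun o _ => by
      cases o
      · simp only [Option.elim]; field_simp; simp
      · simp only [Option.elim]; field_simp [(ha _).ne']; simp)
  simp only [Fintype.sum_option, Option.elim] at hcs
  calc c₀ ^ 2 ≤ (∑ k, |c k| + p * |b|) ^ 2 := by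
        rw [← sq_abs c₀]; exact pow_le_pow_left₀ (abs_nonneg _) h 2
    _ ≤ _ := by linarith

lemma sq_le_mul_of_inv_le {x u R F : ℝ} (hu : 0 < u) (hR : u⁻¹ ≤ R) (hF : x ^ 2 * u ≤ F) :
    x ^ 2 ≤ R * F :=
  calc x ^ 2 = u⁻¹ * (x ^ 2 * u) := by field_simp
    _ ≤ R * F := mul_le_mul hR hF (by positivity) ((inv_pos.2 hu).le.trans hR)

lemma sum_inv_sub_one_le_card_div {K : Type*} [Fintype K] {n : K → ℕ} {m : ℕ} (hm : 2 ≤ m)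
    (hn : ∀ k, m ≤ n k) : ∑ k, ((n k : ℝ) - 1)⁻¹ ≤ Fintype.card K / ((m : ℝ) - 1) := by
  have hm' : (2 : ℝ) ≤ m := by exact_mod_cast hm
  calc ∑ k, ((n k : ℝ) - 1)⁻¹ ≤ ∑ _k : K, ((m : ℝ) - 1)⁻¹ :=
        sum_le_sum fun k _ => inv_anti₀ (by linarith) (by
          have : (m : ℝ) ≤ n k := by exact_mod_cast hn k
          linarith)
    _ = Fintype.card K / ((m : ℝ) - 1) := by simp [div_eq_mul_inv]

lemma Finset.eq_empty_or_exists_eq_singleton_of_card_lt_two {α : Type*} {S : Finset α}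
    (hS : #S < 2) : S = ∅ ∨ ∃ a, S = {a} := by
  obtain hS0 | hS1 : #S = 0 ∨ #S = 1 := by omega
  · exact .inl (card_eq_zero.1 hS0)
  · exact .inr (card_eq_one.1 hS1)

lemma Finset.sum_eq_empty_add_sum_singleton_add {κ M : Type*} [Fintype κ] [DecidableEq κ]
    [AddCommMonoid M] (f : Finset κ → M) :
    ∑ S, f S = f ∅ + ∑ k, f {k} + ∑ S with 2 ≤ #S, f S := by
  have hsmall : univ.filter (fun S : Finset κ => ¬ 2 ≤ #S) =
      insert ∅ (univ.map ⟨singleton, singleton_injective⟩) := by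
    ext S
    simp only [mem_filter, mem_univ, true_and, mem_insert, mem_map, Function.Embedding.coeFn_mk]
    constructor
    · intro hS
      obtain rfl | ⟨k, rfl⟩ := eq_empty_or_exists_eq_singleton_of_card_lt_two (not_le.1 hS)
      exacts [.inl rfl, .inr ⟨k, rfl⟩]
    · rintro (rfl | ⟨k, rfl⟩) <;> simp
  rw [← sum_filter_add_sum_filter_not univ (fun S : Finset κ => 2 ≤ #S), hsmall,
    sum_insert (by simp), sum_map, add_comm]
  rfl

namespace CrossedRandomEffects

variable {κ : Type*} {ι : κ → Type*} [∀ k, Fintype (ι k)]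

variable (ι) in
noncomputable def projRank (S : Finset κ) : ℝ :=
  ∏ k ∈ S, ((Fintype.card (ι k) : ℝ) - 1)

lemma projRank_nonneg [∀ k, Nonempty (ι k)] (S : Finset κ) : 0 ≤ projRank ι S :=
  prod_nonneg fun k _ => sub_nonneg.2 (by exact_mod_cast Fintype.card_pos)

section Projections

variable [DecidableEq κ] [∀ k, DecidableEq (ι k)]

/-- The `k`-th tensor factor of `Q_S = crossProj ι S`: the centring `I - P_k` if `k ∈ S`, the
averaging `P_k = 𝟙𝟙ᵀ / n_k` otherwise. -/
noncomputable def coordProj (S : Finset κ) (k : κ) (a b : ι k) : ℝ :=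
  if k ∈ S then (if a = b then 1 else 0) - (Fintype.card (ι k) : ℝ)⁻¹
  else (Fintype.card (ι k) : ℝ)⁻¹

lemma coordProj_comm (S : Finset κ) (k : κ) (a b : ι k) :
    coordProj S k a b = coordProj S k b a := by
  simp [coordProj, eq_comm]

lemma sum_coordProj_mul [∀ k, Nonempty (ι k)] (S T : Finset κ) (k : κ) (a b : ι k) :
    ∑ z, coordProj S k a z * coordProj T k z b =
      if (k ∈ S ↔ k ∈ T) then coordProj S k a b else 0 := by
  have hn : (Fintype.card (ι k) : ℝ) ≠ 0 := by positivity
  by_cases hS : k ∈ S <;> by_cases hT : k ∈ T <;>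
    simp [coordProj, hS, hT, sub_mul, mul_sub, sum_sub_distrib, hn]

variable [Fintype κ]

variable (ι) in
noncomputable def crossProj (S : Finset κ) : Matrix (∀ k, ι k) (∀ k, ι k) ℝ :=
  Matrix.of fun x y => ∏ k, coordProj S k (x k) (y k)

lemma crossProj_mul_crossProj [∀ k, Nonempty (ι k)] (S T : Finset κ) :
    crossProj ι S * crossProj ι T = if S = T then crossProj ι S else 0 := by
  ext x y
  simp only [crossProj, Matrix.mul_apply, Matrix.of_apply, ← prod_mul_distrib]
  rw [← Fintype.prod_sum (fun k z => coordProj S k (x k) z * coordProj T k z (y k))]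
  simp only [sum_coordProj_mul]
  split_ifs with hST
  · subst hST; simp
  · obtain ⟨k, hk⟩ : ∃ k, ¬ (k ∈ S ↔ k ∈ T) := by
      by_contra! h; exact hST (Finset.ext h)
    exact prod_eq_zero (mem_univ k) (if_neg hk)

lemma sum_crossProj : ∑ S : Finset κ, crossProj ι S = 1 := by
  ext x y
  have hS (S : Finset κ) : ∏ k, coordProj S k (x k) (y k) =
      (∏ k ∈ S, ((if x k = y k then (1 : ℝ) else 0) - (Fintype.card (ι k) : ℝ)⁻¹)) *
        ∏ k ∈ Sᶜ, (Fintype.card (ι k) : ℝ)⁻¹ := by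
    rw [← prod_mul_prod_compl S]
    congr 1
    · exact prod_congr rfl fun k hk => if_pos hk
    · exact prod_congr rfl fun k hk => if_neg (mem_compl.1 hk)
  simp only [Matrix.sum_apply, crossProj, Matrix.of_apply, hS, ← Fintype.prod_add, sub_add_cancel,
    prod_boole, Matrix.one_apply]
  simp [funext_iff]

lemma trace_crossProj [∀ k, Nonempty (ι k)] (S : Finset κ) :
    (crossProj ι S).trace = projRank ι S := by
  have hdiag (k : κ) : ∑ a : ι k, coordProj S k a a =
      if k ∈ S then (Fintype.card (ι k) : ℝ) - 1 else 1 := by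
    have hn : (Fintype.card (ι k) : ℝ) ≠ 0 := by positivity
    by_cases hk : k ∈ S <;> simp [coordProj, hk, hn]
  simp only [Matrix.trace, Matrix.diag_apply, crossProj, Matrix.of_apply]
  rw [← Fintype.prod_sum (fun k a => coordProj S k a a)]
  simp [hdiag, prod_ite_mem, projRank]

lemma transpose_crossProj (S : Finset κ) : (crossProj ι S)ᵀ = crossProj ι S := by
  ext x y
  exact prod_congr rfl fun k _ => coordProj_comm S k (y k) (x k)

lemma dotProduct_crossProj_mulVec_nonneg [∀ k, Nonempty (ι k)] (S : Finset κ)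
    (u : (∀ k, ι k) → ℝ) : 0 ≤ u ⬝ᵥ crossProj ι S *ᵥ u := by
  have hidem : crossProj ι S = crossProj ι S * crossProj ι S := by
    rw [crossProj_mul_crossProj, if_pos rfl]
  rw [hidem, ← Matrix.mulVec_mulVec, Matrix.dotProduct_mulVec, ← Matrix.mulVec_transpose,
    transpose_crossProj]
  exact Fintype.sum_nonneg fun _ => mul_self_nonneg _

variable (ι) in
noncomputable def projComb (c : Finset κ → ℝ) : Matrix (∀ k, ι k) (∀ k, ι k) ℝ :=
  ∑ S, c S • crossProj ι S

lemma projComb_mul_projComb [∀ k, Nonempty (ι k)] (c d : Finset κ → ℝ) :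
    projComb ι c * projComb ι d = projComb ι (c * d) := by
  simp only [projComb, sum_mul_sum, smul_mul_smul_comm, crossProj_mul_crossProj, smul_ite,
    smul_zero, sum_ite_eq, mem_univ, if_true, Pi.mul_apply]

lemma projComb_one : projComb ι 1 = 1 := by
  simp [projComb, sum_crossProj]

lemma transpose_projComb (c : Finset κ → ℝ) : (projComb ι c)ᵀ = projComb ι c := by
  simp [projComb, Matrix.transpose_sum, transpose_crossProj]

lemma trace_projComb [∀ k, Nonempty (ι k)] (c : Finset κ → ℝ) :
    (projComb ι c).trace = ∑ S, c S * projRank ι S := by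
  simp [projComb, Matrix.trace_sum, trace_crossProj]

lemma dotProduct_projComb_mulVec (c : Finset κ → ℝ) (u : (∀ k, ι k) → ℝ) :
    u ⬝ᵥ projComb ι c *ᵥ u = ∑ S, c S * (u ⬝ᵥ crossProj ι S *ᵥ u) := by
  simp [projComb, Matrix.sum_mulVec, dotProduct_sum, Matrix.smul_mulVec]

lemma posSemidef_projComb [∀ k, Nonempty (ι k)] {c : Finset κ → ℝ} (hc : 0 ≤ c) :
    (projComb ι c).PosSemidef := by
  refine Matrix.PosSemidef.of_dotProduct_mulVec_nonneg ?_ fun u => ?_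
  · rw [Matrix.IsHermitian, Matrix.conjTranspose_eq_transpose_of_trivial, transpose_projComb]
  · rw [star_trivial, dotProduct_projComb_mulVec]
    exact sum_nonneg fun S _ => mul_nonneg (hc S) (dotProduct_crossProj_mulVec_nonneg S u)

lemma inv_projComb [∀ k, Nonempty (ι k)] {c : Finset κ → ℝ} (hc : ∀ S, c S ≠ 0) :
    (projComb ι c)⁻¹ = projComb ι c⁻¹ := by
  refine Matrix.inv_eq_right_inv ?_
  rw [projComb_mul_projComb, ← projComb_one]
  exact congrArg (projComb ι) (funext fun S => mul_inv_cancel₀ (hc S))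

lemma msqrt_projComb [∀ k, Nonempty (ι k)] {c : Finset κ → ℝ} (hc : 0 ≤ c) :
    msqrt (projComb ι c) = projComb ι fun S => √(c S) :=
  msqrt_eq_of_mul_self (posSemidef_projComb fun S => Real.sqrt_nonneg _) <| by
    rw [projComb_mul_projComb]
    exact congrArg (projComb ι) (funext fun S => Real.mul_self_sqrt (hc S))

lemma frobNorm_projComb [∀ k, Nonempty (ι k)] (c : Finset κ → ℝ) :
    frobNorm (projComb ι c) = √(∑ S, c S ^ 2 * projRank ι S) := by
  have hrow (x : ∀ k, ι k) :
      ∑ y, projComb ι c x y ^ 2 = (projComb ι c * (projComb ι c)ᵀ) x x := by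
    simp [Matrix.mul_apply, sq]
  rw [frobNorm, sum_congr rfl fun x _ => hrow x, transpose_projComb, projComb_mul_projComb]
  change √(projComb ι (c * c)).trace = _
  simp [trace_projComb, sq]

lemma specNorm_projComb_le [∀ k, Nonempty (ι k)] {c : Finset κ → ℝ} {m : ℝ} (hm : 0 ≤ m)
    (hc : ∀ S, |c S| ≤ m) : specNorm (projComb ι c) ≤ m := by
  refine specNorm_le_of_forall_dotProduct_le hm fun u => ?_
  have hcm (S : Finset κ) : c S * c S ≤ m ^ 2 := by
    rw [← abs_mul_abs_self, sq]; exact mul_self_le_mul_self (abs_nonneg _) (hc S)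
  have hu : u ⬝ᵥ u = ∑ S, u ⬝ᵥ crossProj ι S *ᵥ u := by
    simpa [projComb_one] using dotProduct_projComb_mulVec (ι := ι) 1 u
  calc (projComb ι c *ᵥ u) ⬝ᵥ (projComb ι c *ᵥ u) = u ⬝ᵥ projComb ι (c * c) *ᵥ u := by
        rw [Matrix.dotProduct_mulVec, ← Matrix.mulVec_transpose, transpose_projComb,
          Matrix.mulVec_mulVec, projComb_mul_projComb, dotProduct_comm]
    _ = ∑ S, c S * c S * (u ⬝ᵥ crossProj ι S *ᵥ u) := dotProduct_projComb_mulVec _ u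
    _ ≤ ∑ S, m ^ 2 * (u ⬝ᵥ crossProj ι S *ᵥ u) :=
        sum_le_sum fun S _ => mul_le_mul_of_nonneg_right (hcm S)
          (dotProduct_crossProj_mulVec_nonneg S u)
    _ = m ^ 2 * (u ⬝ᵥ u) := by rw [hu, mul_sum]

lemma sq_specNorm_div_frobNorm_projComb_le [∀ k, Nonempty (ι k)] {c : Finset κ → ℝ} {R : ℝ}
    (hR : 0 ≤ R) (hc : ∀ S, c S ^ 2 ≤ R * ∑ T, c T ^ 2 * projRank ι T) :
    (specNorm (projComb ι c) / frobNorm (projComb ι c)) ^ 2 ≤ R := by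
  set F := ∑ T, c T ^ 2 * projRank ι T
  have hF : 0 ≤ F := sum_nonneg fun T _ => mul_nonneg (sq_nonneg _) (projRank_nonneg T)
  rw [frobNorm_projComb, div_pow, Real.sq_sqrt hF]
  refine div_le_of_le_mul₀ hF hR ?_
  have hspec := specNorm_projComb_le (ι := ι) (Real.sqrt_nonneg (R * F))
    fun S => Real.abs_le_sqrt (hc S)
  calc specNorm (projComb ι c) ^ 2 ≤ √(R * F) ^ 2 := pow_le_pow_left₀ (norm_nonneg _) hspec 2
    _ = R * F := Real.sq_sqrt (mul_nonneg hR hF)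

end Projections

variable [Fintype κ]

lemma one_le_sum_projRank_two_le_card (hκ : 2 ≤ Fintype.card κ)
    (hι : ∀ k, 2 ≤ Fintype.card (ι k)) : 1 ≤ ∑ S with 2 ≤ #S, projRank ι S := by
  have hge (k : κ) : 1 ≤ (Fintype.card (ι k) : ℝ) - 1 := by
    have : (2 : ℝ) ≤ Fintype.card (ι k) := by exact_mod_cast hι k
    linarith
  calc (1 : ℝ) ≤ projRank ι univ := one_le_prod fun k _ => hge k
    _ ≤ ∑ S with 2 ≤ #S, projRank ι S :=
        single_le_sum (f := projRank ι)
          (fun S _ => prod_nonneg fun k _ => zero_le_one.trans (hge k)) (by simpa using hκ)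

variable [DecidableEq κ]

lemma sum_projRank_two_le_card :
    ∑ S with 2 ≤ #S, projRank ι S =
      ∏ k, (Fintype.card (ι k) : ℝ) - 1 - ∑ k, ((Fintype.card (ι k) : ℝ) - 1) := by
  have htotal : ∑ S, projRank ι S = ∏ k, (Fintype.card (ι k) : ℝ) := by
    simpa [projRank] using (Fintype.prod_add (fun k => (Fintype.card (ι k) : ℝ) - 1) 1).symm
  rw [← htotal, sum_eq_empty_add_sum_singleton_add]
  simp only [projRank, prod_empty, prod_singleton]
  ring

lemma sum_sq_mul_projRank_eq {c : Finset κ → ℝ} {b : ℝ} (hc : ∀ S : Finset κ, 2 ≤ #S → c S = b) :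
    ∑ T, c T ^ 2 * projRank ι T = c ∅ ^ 2 + (∑ k, c {k} ^ 2 * ((Fintype.card (ι k) : ℝ) - 1) +
      b ^ 2 * ∑ S with 2 ≤ #S, projRank ι S) := by
  rw [sum_eq_empty_add_sum_singleton_add, add_assoc, mul_sum]
  congr 1
  · simp [projRank]
  · congr 1
    · simp [projRank]
    · exact sum_congr rfl fun T hT => by rw [hc T (mem_filter.1 hT).2]

theorem sq_apply_le_mul_sum_sq_mul_projRank (hκ : 2 ≤ Fintype.card κ)
    (hι : ∀ k, 2 ≤ Fintype.card (ι k)) {c : Finset κ → ℝ} {b : ℝ}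
    (hc : ∀ S : Finset κ, 2 ≤ #S → c S = b)
    (hc₀ : |c ∅| ≤ ∑ k, |c {k}| + ((Fintype.card κ : ℝ) - 1) * |b|) (S : Finset κ) :
    c S ^ 2 ≤ (∑ k, ((Fintype.card (ι k) : ℝ) - 1)⁻¹ + ((Fintype.card κ : ℝ) - 1) ^ 2 /
        (∏ k, (Fintype.card (ι k) : ℝ) - 1 - ∑ k, ((Fintype.card (ι k) : ℝ) - 1))) *
      ∑ T, c T ^ 2 * projRank ι T := by
  rw [← sum_projRank_two_le_card, sum_sq_mul_projRank_eq hc]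
  set t := ∑ S with 2 ≤ #S, projRank ι S
  set p := (Fintype.card κ : ℝ) - 1
  set a : κ → ℝ := fun k => (Fintype.card (ι k) : ℝ) - 1
  have ht : 0 < t := zero_lt_one.trans_le (one_le_sum_projRank_two_le_card hκ hι)
  have hp : 1 ≤ p := by
    have : (2 : ℝ) ≤ Fintype.card κ := by exact_mod_cast hκ
    linarith
  have ha (k : κ) : 0 < a k := by
    have : (2 : ℝ) ≤ Fintype.card (ι k) := by exact_mod_cast hι k
    simp only [a]; linarith
  set R := ∑ k, (a k)⁻¹ + p ^ 2 / t
  set F := ∑ k, c {k} ^ 2 * a k + b ^ 2 * t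
  have hsum_inv : 0 ≤ ∑ k, (a k)⁻¹ := sum_nonneg fun k _ => (inv_pos.2 (ha k)).le
  have hsum_sq : 0 ≤ ∑ k, c {k} ^ 2 * a k := sum_nonneg fun k _ => by have := ha k; positivity
  have hR : 0 ≤ R := by positivity
  suffices h : c S ^ 2 ≤ R * F by
    rw [mul_add]
    exact le_add_of_nonneg_of_le (mul_nonneg hR (sq_nonneg _)) h
  by_cases hS : 2 ≤ #S
  · refine hc S hS ▸ sq_le_mul_of_inv_le ht ?_ (le_add_of_nonneg_left hsum_sq)
    calc t⁻¹ ≤ p ^ 2 / t := by rw [inv_eq_one_div]; gcongr; exact one_le_pow₀ hp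
      _ ≤ R := le_add_of_nonneg_left hsum_inv
  obtain rfl | ⟨k, rfl⟩ := eq_empty_or_exists_eq_singleton_of_card_lt_two (not_le.1 hS)
  · exact sq_le_sum_inv_add_mul_sum ha ht hc₀
  · refine sq_le_mul_of_inv_le (ha k) ?_ ?_
    · exact (single_le_sum (fun i _ => (inv_pos.2 (ha i)).le) (mem_univ k)).trans
        (le_add_of_nonneg_right (by positivity))
    · exact (single_le_sum (f := fun i => c {i} ^ 2 * a i)
        (fun i _ => by have := ha i; positivity) (mem_univ k)).trans
        (le_add_of_nonneg_right (by positivity))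

variable (ι) in
/-- The paper's `n_{(k)}`. -/
noncomputable def coCard (k : κ) : ℝ :=
  ∏ i ∈ univ.erase k, (Fintype.card (ι i) : ℝ)

variable (ι) in
/-- The eigenvalue `λ_S` of `crossCov ι w e` on the range of `Q_S`: the `k`-th random effect
`w_k 1{x_k = y_k} = n_{(k)} w_k (Q_∅ + Q_{k})` only lives on `S = ∅` and `S = {k}`. -/
noncomputable def crossEigen (w : κ → ℝ) (e : ℝ) (S : Finset κ) : ℝ :=
  e + ∑ k, if S ⊆ {k} then coCard ι k * w k else 0

lemma crossEigen_empty (w : κ → ℝ) (e : ℝ) :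
    crossEigen ι w e ∅ = e + ∑ k, coCard ι k * w k := by
  simp [crossEigen]

lemma crossEigen_singleton (w : κ → ℝ) (e : ℝ) (k : κ) :
    crossEigen ι w e {k} = e + coCard ι k * w k := by
  simp [crossEigen, eq_comm]

lemma crossEigen_of_two_le_card (w : κ → ℝ) (e : ℝ) {S : Finset κ} (hS : 2 ≤ #S) :
    crossEigen ι w e S = e := by
  have (k : κ) : ¬ S ⊆ {k} := fun h => by simpa using (card_le_card h).trans_lt' hS
  simp [crossEigen, this]

lemma coCard_mul_nonneg {w : κ → ℝ} (hw : 0 ≤ w) (k : κ) : 0 ≤ coCard ι k * w k :=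
  mul_nonneg (prod_nonneg fun _ _ => Nat.cast_nonneg _) (hw k)

lemma crossEigen_pos {w : κ → ℝ} {e : ℝ} (hw : 0 ≤ w) (he : 0 < e) (S : Finset κ) :
    0 < crossEigen ι w e S :=
  add_pos_of_pos_of_nonneg he <| sum_nonneg fun k _ => by
    split_ifs
    exacts [coCard_mul_nonneg hw k, le_rfl]

lemma abs_crossEigen_empty_div_le [Nonempty κ] {w' : κ → ℝ} {e' : ℝ} (hw' : 0 ≤ w') (he' : 0 < e')
    (w : κ → ℝ) (e : ℝ) :
    |crossEigen ι w e ∅ / crossEigen ι w' e' ∅| ≤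
      ∑ k, |crossEigen ι w e {k} / crossEigen ι w' e' {k}| +
        ((Fintype.card κ : ℝ) - 1) * |e / e'| := by
  have hpos := crossEigen_pos (ι := ι) hw' he'
  have hK : (1 : ℝ) ≤ Fintype.card κ := by exact_mod_cast Fintype.card_pos
  have hsplit : crossEigen ι w e ∅ =
      ∑ k, crossEigen ι w e {k} - ((Fintype.card κ : ℝ) - 1) * e := by
    simp only [crossEigen_empty, crossEigen_singleton, sum_add_distrib, sum_const, card_univ,
      nsmul_eq_mul]
    ring
  have hle_single (k : κ) : crossEigen ι w' e' {k} ≤ crossEigen ι w' e' ∅ := by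
    rw [crossEigen_empty, crossEigen_singleton]
    gcongr
    exact single_le_sum (fun i _ => coCard_mul_nonneg hw' i) (mem_univ k)
  have hle_diag : e' ≤ crossEigen ι w' e' ∅ := by
    rw [crossEigen_empty]
    linarith [sum_nonneg fun i (_ : i ∈ univ) => coCard_mul_nonneg (ι := ι) hw' i]
  have key {x a b : ℝ} (ha : 0 < a) (hab : a ≤ b) : |x| ≤ |x / a| * b :=
    calc |x| = |x / a| * a := by rw [abs_div, abs_of_pos ha, div_mul_cancel₀ _ ha.ne']
      _ ≤ |x / a| * b := by gcongr
  rw [abs_div, abs_of_pos (hpos ∅), div_le_iff₀ (hpos ∅), add_mul, sum_mul, mul_assoc]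
  calc |crossEigen ι w e ∅|
      ≤ ∑ k, |crossEigen ι w e {k}| + ((Fintype.card κ : ℝ) - 1) * |e| := by
        rw [hsplit]
        refine (abs_sub _ _).trans (add_le_add (abs_sum_le_sum_abs _ _) ?_)
        rw [abs_mul, abs_of_nonneg (by linarith)]
    _ ≤ _ := by
        gcongr with k
        exacts [key (hpos _) (hle_single k), key he' hle_diag]

section Covariance

variable [∀ k, DecidableEq (ι k)]

variable (ι) in
noncomputable def crossCov (w : κ → ℝ) (e : ℝ) : Matrix (∀ k, ι k) (∀ k, ι k) ℝ :=
  Matrix.of fun x y => (∑ k, if x k = y k then w k else 0) + if x = y then e else 0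

lemma coordEq_eq_smul_crossProj [∀ k, Nonempty (ι k)] (k : κ) :
    (Matrix.of fun x y : (∀ i, ι i) => if x k = y k then (1 : ℝ) else 0) =
      coCard ι k • (crossProj ι ∅ + crossProj ι {k}) := by
  ext x y
  have hoff : ∀ i ∈ univ.erase k,
      coordProj {k} i (x i) (y i) = coordProj (∅ : Finset κ) i (x i) (y i) := fun i hi => by
    simp [coordProj, ne_of_mem_erase hi]
  have hcard : coCard ι k * ∏ i ∈ univ.erase k, (Fintype.card (ι i) : ℝ)⁻¹ = 1 := by
    rw [coCard, ← prod_mul_distrib]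
    exact prod_eq_one fun i _ => mul_inv_cancel₀ (by positivity)
  simp only [crossProj, Matrix.of_apply, Matrix.smul_apply, Matrix.add_apply, smul_eq_mul]
  rw [← mul_prod_erase univ _ (mem_univ k), ← mul_prod_erase univ _ (mem_univ k),
    prod_congr rfl hoff, ← add_mul]
  simp only [coordProj, mem_singleton, notMem_empty, if_true, if_false, add_sub_cancel]
  rw [mul_left_comm, hcard, mul_one]

lemma crossCov_eq_projComb [∀ k, Nonempty (ι k)] (w : κ → ℝ) (e : ℝ) :
    crossCov ι w e = projComb ι (crossEigen ι w e) := by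
  have hcov : crossCov ι w e = e • 1 + ∑ k, w k •
      Matrix.of (fun x y : (∀ i, ι i) => if x k = y k then (1 : ℝ) else 0) := by
    ext x y
    simp [crossCov, Matrix.one_apply, Matrix.sum_apply, add_comm]
  have hsub (k : κ) (f : Finset κ → Matrix (∀ k, ι k) (∀ k, ι k) ℝ) :
      ∑ S : Finset κ, (if S ⊆ {k} then f S else 0) = f ∅ + f {k} := by
    have : univ.filter (· ⊆ {k}) = ({∅, {k}} : Finset (Finset κ)) := by
      ext S; simp [subset_singleton_iff]
    rw [← sum_filter, this, sum_pair (singleton_ne_empty k).symm]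
  simp only [projComb, crossEigen, add_smul, sum_add_distrib, ← smul_sum, sum_crossProj, sum_smul,
    ite_smul, zero_smul]
  rw [hcov, sum_comm]
  congr 1
  refine sum_congr rfl fun k _ => ?_
  rw [hsub, coordEq_eq_smul_crossProj, smul_smul, mul_comm, smul_add]

lemma whiten_crossCov [∀ k, Nonempty (ι k)] {w' : κ → ℝ} {e' : ℝ} (hw' : 0 ≤ w') (he' : 0 < e')
    (w : κ → ℝ) (e : ℝ) :
    (msqrt (crossCov ι w' e'))⁻¹ * crossCov ι w e * (msqrt (crossCov ι w' e'))⁻¹ =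
      projComb ι (crossEigen ι w e / crossEigen ι w' e') := by
  have hpos := crossEigen_pos (ι := ι) hw' he'
  rw [crossCov_eq_projComb, crossCov_eq_projComb, msqrt_projComb fun S => (hpos S).le,
    inv_projComb fun S => (Real.sqrt_pos.2 (hpos S)).ne', projComb_mul_projComb,
    projComb_mul_projComb]
  refine congrArg (projComb ι) (funext fun S => ?_)
  simp only [Pi.mul_apply, Pi.inv_apply, Pi.div_apply]
  field_simp
  rw [Real.sq_sqrt (hpos S).le]

theorem sq_specNorm_div_frobNorm_projComb_le_sum_inv_add [∀ k, Nonempty (ι k)]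
    (hκ : 2 ≤ Fintype.card κ) (hι : ∀ k, 2 ≤ Fintype.card (ι k)) {c : Finset κ → ℝ} {b : ℝ}
    (hc : ∀ S : Finset κ, 2 ≤ #S → c S = b)
    (hc₀ : |c ∅| ≤ ∑ k, |c {k}| + ((Fintype.card κ : ℝ) - 1) * |b|) :
    (specNorm (projComb ι c) / frobNorm (projComb ι c)) ^ 2 ≤
      ∑ k, ((Fintype.card (ι k) : ℝ) - 1)⁻¹ + ((Fintype.card κ : ℝ) - 1) ^ 2 /
        (∏ k, (Fintype.card (ι k) : ℝ) - 1 - ∑ k, ((Fintype.card (ι k) : ℝ) - 1)) := by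
  have ht := one_le_sum_projRank_two_le_card hκ hι
  rw [sum_projRank_two_le_card] at ht
  refine sq_specNorm_div_frobNorm_projComb_le ?_ (sq_apply_le_mul_sum_sq_mul_projRank hκ hι hc hc₀)
  exact add_nonneg
    (sum_nonneg fun k _ => inv_nonneg.2 (sub_nonneg.2 (by exact_mod_cast Fintype.card_pos)))
    (div_nonneg (sq_nonneg _) (zero_le_one.trans ht))

end Covariance

end CrossedRandomEffects

open CrossedRandomEffects in
/-- Crossed random effects, `r ≥ 3` and `n_j ≥ 2`: for every `ψ` with `ψ_j ≥ 0`
(`j < r`), `ψ_r > 0`, and every `v ≠ 0` with `‖A(v,ψ)‖_F ≠ 0`,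
`a(v,ψ)² ≤ ∑_j (n_j − 1)⁻¹ + (r−2)²/ñ ≤ (r−1)/(n_min − 1) + (r−2)²/ñ`. -/
theorem stmt17 {rm1 : ℕ} (hr : 2 ≤ rm1) (nn : Fin rm1 → ℕ) (hnn : ∀ j, 2 ≤ nn j)
    (nmin : ℕ) (hmin : IsLeast (Set.range nn) nmin)
    (ψ : Fin (rm1 + 1) → ℝ) (hψ : ∀ j : Fin rm1, 0 ≤ ψ j.castSucc)
    (hψr : 0 < ψ (Fin.last rm1)) :
    ∀ v : Fin (rm1 + 1) → ℝ, v ≠ 0 →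
      frobNorm ((msqrt (SigmaCross nn ψ))⁻¹ * SigmaCross nn v *
        (msqrt (SigmaCross nn ψ))⁻¹) ≠ 0 →
      (specNorm ((msqrt (SigmaCross nn ψ))⁻¹ * SigmaCross nn v *
            (msqrt (SigmaCross nn ψ))⁻¹) /
          frobNorm ((msqrt (SigmaCross nn ψ))⁻¹ * SigmaCross nn v *
            (msqrt (SigmaCross nn ψ))⁻¹)) ^ 2
        ≤ (∑ j, ((nn j : ℝ) - 1)⁻¹) +
            ((rm1 : ℝ) - 1) ^ 2 /
              ((∏ j, nn j : ℕ) - 1 - ∑ j, ((nn j : ℝ) - 1))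
      ∧ (∑ j, ((nn j : ℝ) - 1)⁻¹) +
            ((rm1 : ℝ) - 1) ^ 2 /
              ((∏ j, nn j : ℕ) - 1 - ∑ j, ((nn j : ℝ) - 1))
          ≤ (rm1 : ℝ) / ((nmin : ℝ) - 1) +
            ((rm1 : ℝ) - 1) ^ 2 /
              ((∏ j, nn j : ℕ) - 1 - ∑ j, ((nn j : ℝ) - 1)) := by
  intro v _ _
  have : Nonempty (Fin rm1) := ⟨⟨0, by omega⟩⟩
  have : ∀ j, Nonempty (Fin (nn j)) := fun j => ⟨⟨0, by have := hnn j; omega⟩⟩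
  obtain ⟨⟨j₀, rfl⟩, hmin⟩ := hmin
  -- `SigmaCross nn v` is `crossCov ι (fun j => v j.castSucc) (v (Fin.last rm1))` by definition.
  let ι := fun j => Fin (nn j)
  let c := crossEigen ι (fun j : Fin rm1 => v j.castSucc) (v (Fin.last rm1)) /
    crossEigen ι (fun j : Fin rm1 => ψ j.castSucc) (ψ (Fin.last rm1))
  have hwhite : (msqrt (SigmaCross nn ψ))⁻¹ * SigmaCross nn v * (msqrt (SigmaCross nn ψ))⁻¹ =
      projComb ι c := whiten_crossCov hψ hψr _ _
  have hratio := sq_specNorm_div_frobNorm_projComb_le_sum_inv_add (ι := ι) (c := c)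
    (b := v (Fin.last rm1) / ψ (Fin.last rm1)) (by simpa using hr) (by simpa [ι] using hnn)
    (fun S hS => by simp only [c, Pi.div_apply, crossEigen_of_two_le_card _ _ hS])
    (abs_crossEigen_empty_div_le hψ hψr _ _)
  simp only [ι, Fintype.card_fin, ← Nat.cast_prod] at hratio
  refine ⟨hwhite ▸ hratio, add_le_add_left ?_ _⟩
  simpa using sum_inv_sub_one_le_card_div (hnn j₀) fun j => hmin ⟨j, rfl⟩
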